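/- The edge set of the Petersen graph cannot be partitioned into three perfect matchings. -/

import Mathlib

/-!
Colouring each edge by the perfect matching containing it gives a proper 3-edge-colouring of the
Petersen graph, i.e. a proper 3-colouring of its line graph. The line graph has no such colouring:
a backtracking search over the fifteen edges, which extends partial colourings one edge at a time
and discards the improper ones, runs out of candidates.
-/

/-- The Petersen graph as the Kneser graph K(5,2): vertices are 2-element
subsets of a 5-element set, adjacent iff disjoint. -/
def petersen : SimpleGraph {s : Finset (Fin 5) // s.card = 2} where
  Adj s t := Disjoint s.val t.val
  symm := ⟨fun s t h => h.symm⟩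
  loopless := by
    constructor
    intro s h
    rw [disjoint_self] at h
    have h2 := s.2
    rw [h] at h2
    simp at h2

namespace SimpleGraph

variable {V W ι : Type*}

instance [DecidableEq V] (G : SimpleGraph V) : DecidableRel G.lineGraph.Adj := fun e f =>
  decidable_of_iff (e ≠ f ∧ ((e : Sym2 V).toFinset ∩ (f : Sym2 V).toFinset).Nonempty)
    (by simp [lineGraph_adj_iff_exists, Finset.Nonempty])

theorem nonempty_lineGraph_coloring_of_isMatching {G : SimpleGraph V} (M : ι → G.Subgraph)
    (hM : ∀ i, (M i).IsMatching) (hcover : ∀ e ∈ G.edgeSet, ∃ i, e ∈ (M i).edgeSet) :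
    Nonempty (G.lineGraph.Coloring ι) := by
  choose c hc using hcover
  refine ⟨Coloring.mk (fun e => c e e.2) fun {e f} hef hcol => ?_⟩
  obtain ⟨hne, v, hve, hvf⟩ := lineGraph_adj_iff_exists.mp hef
  obtain ⟨e, he⟩ := e
  obtain ⟨f, hf⟩ := f
  obtain ⟨w, rfl⟩ := Sym2.mem_iff_exists.mp hve
  obtain ⟨w', rfl⟩ := Sym2.mem_iff_exists.mp hvf
  have hw : (M (c _ he)).Adj v w := hc _ he
  have hw' : (M (c _ he)).Adj v w' := hcol ▸ hc _ hf
  exact hne (Subtype.ext (congrArg (s(v, ·)) ((hM _).eq_of_adj_left hw hw')))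

def properColoringsOn (H : SimpleGraph W) [DecidableRel H.Adj] (n : ℕ) :
    List W → List (List (W × Fin n))
  | [] => [[]]
  | w :: ws => (properColoringsOn H n ws).flatMap fun σ =>
      ((List.finRange n).filter fun a => σ.all fun p => !(H.Adj w p.1 ∧ a = p.2)).map
        fun a => (w, a) :: σ

theorem Coloring.map_mem_properColoringsOn {H : SimpleGraph W} [DecidableRel H.Adj] {n : ℕ}
    (C : H.Coloring (Fin n)) (ws : List W) :
    ws.map (fun w => (w, C w)) ∈ properColoringsOn H n ws := by
  induction ws with
  | nil => simp [properColoringsOn]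
  | cons w ws ih =>
    simp only [properColoringsOn, List.mem_flatMap, List.mem_map, List.mem_filter]
    refine ⟨_, ih, C w, ⟨List.mem_finRange _, ?_⟩, rfl⟩
    simp only [List.all_map, List.all_eq_true]
    intro u _
    simp only [Function.comp_apply, Bool.not_eq_true', decide_eq_false_iff_not]
    exact fun ⟨hadj, hcol⟩ => C.valid hadj hcol

theorem not_colorable_of_properColoringsOn_eq_nil {H : SimpleGraph W} [DecidableRel H.Adj]
    {n : ℕ} (ws : List W) (h : properColoringsOn H n ws = []) : ¬ H.Colorable n := fun ⟨C⟩ => by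
  simpa [h] using Coloring.map_mem_properColoringsOn C ws

end SimpleGraph

open SimpleGraph

instance : DecidableRel petersen.Adj := fun s t => inferInstanceAs (Decidable (Disjoint s.1 t.1))

def petersenEdge (a b c d : Fin 5) (hab : a ≠ b := by decide) (hcd : c ≠ d := by decide) :
    Sym2 {s : Finset (Fin 5) // s.card = 2} :=
  s(⟨{a, b}, Finset.card_pair hab⟩, ⟨{c, d}, Finset.card_pair hcd⟩)

def petersenEdges : List petersen.edgeSet :=
  [petersenEdge 0 1 2 3, petersenEdge 0 1 2 4, petersenEdge 0 1 3 4,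
    petersenEdge 0 2 1 3, petersenEdge 0 2 1 4, petersenEdge 0 2 3 4,
    petersenEdge 0 3 1 2, petersenEdge 0 3 1 4, petersenEdge 0 3 2 4,
    petersenEdge 0 4 1 2, petersenEdge 0 4 1 3, petersenEdge 0 4 2 3,
    petersenEdge 1 2 3 4, petersenEdge 1 3 2 4, petersenEdge 1 4 2 3].pmap Subtype.mk (by decide)

theorem petersen_lineGraph_not_colorable_three : ¬ petersen.lineGraph.Colorable 3 :=
  not_colorable_of_properColoringsOn_eq_nil petersenEdges (by decide)

/-- The edge set of the Petersen graph cannot be partitioned into three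
perfect matchings. -/
theorem petersen_no_one_factorization :
    ¬ ∃ M : Fin 3 → petersen.Subgraph,
        (∀ i, (M i).IsPerfectMatching) ∧
        (∀ e ∈ petersen.edgeSet, ∃! i, e ∈ (M i).edgeSet) := by
  rintro ⟨M, hM, hcover⟩
  exact petersen_lineGraph_not_colorable_three <|
    nonempty_lineGraph_coloring_of_isMatching M (fun i => (hM i).1) fun e he => (hcover e he).exists
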